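/- arXiv:1703.08266 — 12 statements merged into one kernel-verified Lean document; each statement's English description precedes it below -/
import Mathlib

section
/- Let S be a commutative unital ring and let g, h ∈ S with g and h both nonunits and h a regular element (non-zerodivisor). Then gh is not a logical power of gh; that is, there exists a divisor of gh which is neither a unit nor a multiple of gh. -/
def IsLogPow {S : Type*} [CommRing S] (p f : S) : Prop :=
  p ∣ f ∧ (p - 1) ∣ (f - 1) ∧ ∀ g : S, g ∣ f → IsUnit g ∨ p ∣ g

theorem not_mul_dvd_self_of_isLeftRegular {M : Type*} [CommMonoid M] {a h : M}
    (hh : IsLeftRegular h) (ha : ¬IsUnit a) : ¬a * h ∣ h := by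
  rw [mul_comm]
  nth_rw 2 [← mul_one h]
  rwa [hh.dvd_cancel_left, ← isUnit_iff_dvd_one]

theorem not_isLogPow_of_dvd {S : Type*} [CommRing S] {p f d : S}
    (hdf : d ∣ f) (hd : ¬IsUnit d) (hpd : ¬p ∣ d) : ¬IsLogPow p f :=
  fun hpf => (hpf.2.2 d hdf).elim hd hpd

theorem stmt_0 {S : Type*} [CommRing S] (g h : S)
    (hg : ¬IsUnit g) (hh : ¬IsUnit h) (hreg : h ∈ nonZeroDivisors S) :
    ¬IsLogPow (g * h) (g * h) ∧
      ∃ d : S, d ∣ g * h ∧ ¬IsUnit d ∧ ¬(g * h ∣ d) := by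
  have hdvd : h ∣ g * h := dvd_mul_left h g
  have hnd : ¬g * h ∣ h :=
    not_mul_dvd_self_of_isLeftRegular (isRegular_iff_mem_nonZeroDivisors.mpr hreg).left hg
  exact ⟨not_isLogPow_of_dvd hdvd hh hnd, h, hdvd, hh, hnd⟩
end

section
/- Let S be a commutative unital ring containing an element s such that both s and s+1 are nonunits. Then the following are equivalent: (a) 0 is a logical power of p; (b) both p and p−1 are units; (c) every element of S is a logical power of p. -/
theorem stmt_1 {S : Type*} [CommRing S] (s : S)
    (hs : ¬IsUnit s) (hs1 : ¬IsUnit (s + 1)) (p : S) :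
    (IsLogPow p 0 ↔ (IsUnit p ∧ IsUnit (p - 1))) ∧
      ((IsUnit p ∧ IsUnit (p - 1)) ↔ ∀ f : S, IsLogPow p f) := by
  have key : IsLogPow p 0 ↔ (IsUnit p ∧ IsUnit (p - 1)) := by
    constructor
    · rintro ⟨-, hd, hall⟩
      have hp1 : IsUnit (p - 1) := by
        have : (p - 1) ∣ (-1 : S) := by simpa using hd
        exact isUnit_of_dvd_unit this isUnit_one.neg
      refine ⟨?_, hp1⟩
      have h1 : p ∣ s := (hall s (dvd_zero s)).resolve_left hs
      have h2 : p ∣ s + 1 := (hall (s + 1) (dvd_zero _)).resolve_left hs1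
      have : p ∣ 1 := by simpa using dvd_sub h2 h1
      exact isUnit_of_dvd_one this
    · rintro ⟨hp, hp1⟩
      exact ⟨dvd_zero p, hp1.dvd, fun g _ => Or.inr hp.dvd⟩
  refine ⟨key, ?_, fun h => key.mp (h 0)⟩
  rintro ⟨hp, hp1⟩ f
  exact ⟨hp.dvd, hp1.dvd, fun g _ => Or.inr hp.dvd⟩
end

section
/- Let S be a commutative unital ring and p ∈ S. Any logical power f of p is either infinitely divisible by p (i.e., divisible by p^n for all n ≥ 1), or of the form u·p^n for some n ≥ 1 and some unit u with (p−1) ∣ (u−1). -/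
theorem stmt_2 {S : Type*} [CommRing S] (p f : S) (hf : IsLogPow p f) :
    (∀ n : ℕ, 1 ≤ n → p ^ n ∣ f) ∨
      ∃ (n : ℕ) (u : S), 1 ≤ n ∧ IsUnit u ∧ (p - 1) ∣ (u - 1) ∧ f = u * p ^ n := by
  obtain ⟨hp, hp1, hdiv⟩ := hf
  by_cases hall : ∀ n : ℕ, 1 ≤ n → p ^ n ∣ f
  · exact Or.inl hall
  right
  push_neg at hall
  classical
  obtain ⟨N, hN1, hNd⟩ := hall
  set n := Nat.findGreatest (fun k => p ^ k ∣ f) N with hn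
  have hnd : p ^ n ∣ f := by
    have := Nat.findGreatest_spec (P := fun k => p ^ k ∣ f) (m := 1) hN1 (by simpa using hp)
    exact this
  have hn1 : 1 ≤ n := by
    exact Nat.le_findGreatest hN1 (by simpa using hp)
  have hnN : n < N := by
    rcases lt_or_eq_of_le (Nat.findGreatest_le N : n ≤ N) with h | h
    · exact h
    · exact absurd (h ▸ hnd) hNd
  have hnsucc : ¬ p ^ (n + 1) ∣ f :=
    Nat.findGreatest_is_greatest (Nat.lt_succ_self n) (Nat.succ_le_of_lt hnN)
  obtain ⟨g, hg⟩ := hnd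
  have hgdvd : g ∣ f := ⟨p ^ n, by rw [hg]; ring⟩
  rcases hdiv g hgdvd with hu | hpg
  · refine ⟨n, g, hn1, hu, ?_, by rw [hg]; ring⟩
    have h1 : (p - 1) ∣ (p ^ n - 1 ^ n) := sub_dvd_pow_sub_pow p 1 n
    simp only [one_pow] at h1
    have h2 : g - 1 = (f - 1) - g * (p ^ n - 1) := by rw [hg]; ring
    rw [h2]
    exact dvd_sub hp1 (Dvd.dvd.mul_left h1 g)
  · exfalso
    apply hnsucc
    obtain ⟨c, hc⟩ := hpg
    exact ⟨c, by rw [hg, hc]; ring⟩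
end

section
/- Let R be a commutative unital ring. If the polynomial x ∈ R[x] is a logical power of x and either every logical power of x in R[x] is a positive power of x, or every positive power of x is a logical power of x, then R is reduced. -/
lemma sq_zero_reduced {R : Type*} [CommRing R] (h : ∀ a : R, a ^ 2 = 0 → a = 0) :
    IsReduced R := by
  constructor
  rintro x ⟨n, hn⟩
  induction n using Nat.strong_induction_on generalizing x with
  | _ n ih =>
    match n with
    | 0 =>
      have h1 : (1 : R) = 0 := by simpa using hn
      calc x = x * 1 := (mul_one x).symm
        _ = 0 := by rw [h1, mul_zero]
    | 1 => simpa using hn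
    | (k+2) =>
      have hsq : (x ^ (k+1)) ^ 2 = 0 := by
        rw [← pow_mul]
        exact pow_eq_zero_of_le (by omega) hn
      exact ih (k+1) (by omega) x (h _ hsq)

open Polynomial in
theorem stmt_5 {R : Type*} [CommRing R]
    (hx : IsLogPow (X : R[X]) (X : R[X]))
    (h : (∀ f : R[X], IsLogPow (X : R[X]) f → ∃ n : ℕ, 1 ≤ n ∧ f = X ^ n) ∨
         (∀ n : ℕ, 1 ≤ n → IsLogPow (X : R[X]) (X ^ n))) :
    IsReduced R := by
  apply sq_zero_reduced
  intro a ha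
  have haa : a * a = 0 := by rw [← sq]; exact ha
  rcases h with hl | hr
  · -- left case
    set u : R[X] := C a * X + C (1 - a) with hu_def
    set v : R[X] := C (-a) * X + C (1 + a) with hv_def
    have hca : (C a : R[X]) ^ 2 = 0 := by rw [← C_pow, ha, C_0]
    have huv : u * v = 1 := by
      simp only [hu_def, hv_def, C_sub, C_add, C_neg, C_1]
      linear_combination (2 * X - X ^ 2 - 1) * hca
    set f : R[X] := X * u with hf_def
    have hfX : f ∣ X := ⟨v, by rw [hf_def, mul_assoc, huv, mul_one]⟩
    have hlog : IsLogPow (X : R[X]) f := by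
      refine ⟨⟨u, hf_def⟩, ?_, ?_⟩
      · have h1 : (X : R[X]) - 1 = X - C 1 := by simp
        rw [h1, dvd_iff_isRoot]
        simp [IsRoot, hf_def, hu_def]
      · intro g hg
        exact hx.2.2 g (hg.trans hfX)
    obtain ⟨n, hn1, hfn⟩ := hl f hlog
    have hc2 : a = (X ^ n : R[X]).coeff 2 := by
      rw [← hfn, hf_def, hu_def]
      rw [show (2:ℕ) = 1 + 1 from rfl, coeff_X_mul]
      simp [coeff_one]
    have hc1 : 1 - a = (X ^ n : R[X]).coeff 1 := by
      rw [← hfn, hf_def, hu_def]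
      rw [show (1:ℕ) = 0 + 1 from rfl, coeff_X_mul]
      simp
    rw [coeff_X_pow] at hc2 hc1
    by_cases h2 : n = 2
    · rw [h2] at hc1
      simp at hc1
      -- hc1 : 1 - a = 0
      have ha1 : a = 1 := by linear_combination -hc1
      have : (1 : R) = 0 := by rw [← haa, ha1, mul_one]
      rw [ha1, this]
    · rw [if_neg (by omega)] at hc2
      exact hc2
  · -- right case
    obtain ⟨-, -, h3⟩ := hr 2 one_le_two
    have hdvd : (X + C a) ∣ (X : R[X]) ^ 2 := by
      refine ⟨X - C a, ?_⟩
      have hca : (C a : R[X]) ^ 2 = 0 := by rw [← C_pow, ha, C_0]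
      linear_combination hca
    rcases h3 _ hdvd with hu | hd
    · rw [Polynomial.isUnit_iff_coeff_isUnit_isNilpotent] at hu
      have h1 : IsNilpotent ((X + C a : R[X]).coeff 1) := hu.2 1 one_ne_zero
      simp at h1
      obtain ⟨k, hk⟩ := h1
      simp at hk
      calc a = a * 1 := (mul_one a).symm
        _ = 0 := by rw [hk, mul_zero]
    · have : X ∣ (C a : R[X]) := (dvd_add_right (dvd_refl X)).mp hd
      rw [X_dvd_iff] at this
      simpa using this
end

section
/- Let R be a commutative unital ring and f, g, h ∈ R[x] with f = g·h. If deg(g) = m > deg(f) and deg(h) = k, then g_m^{k+1}·f = 0, where g_m is the leading coefficient of g. -/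
/-! If `g * h` has degree below `deg g`, the top coefficient `lc g * lc h` of the product must
vanish, so multiplying `h` by `C (lc g)` strictly lowers its degree, while `g * (C (lc g) * h)`
still has degree below `deg g`. Hence `deg h + 1` such multiplications kill `h`, and a fortiori
`g * h`. -/

namespace Polynomial

variable {R : Type*} [CommRing R] {g h : R[X]}

theorem leadingCoeff_mul_leadingCoeff_eq_zero_of_degree_mul_lt (hd : (g * h).degree < g.degree) :
    g.leadingCoeff * h.leadingCoeff = 0 := by
  by_contra hne
  have hh : h ≠ 0 := by rintro rfl; simp at hne
  rw [degree_mul' hne] at hd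
  exact hd.not_ge (le_add_of_nonneg_right (zero_le_degree_iff.mpr hh))

theorem degree_C_mul_lt_of_mul_leadingCoeff_eq_zero {a : R} (ha : a * h.leadingCoeff = 0)
    (hh : h ≠ 0) : (C a * h).degree < h.degree := by
  rw [degree_eq_natDegree hh, degree_lt_iff_coeff_zero]
  intro m hm
  rw [coeff_C_mul]
  rcases hm.eq_or_lt with rfl | hlt
  · exact ha
  · rw [coeff_eq_zero_of_natDegree_lt hlt, mul_zero]

theorem degree_mul_C_mul_lt_of_degree_mul_lt (a : R) (hd : (g * h).degree < g.degree) :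
    (g * (C a * h)).degree < g.degree := by
  rw [mul_left_comm, ← smul_eq_C_mul]
  exact (degree_smul_le _ _).trans_lt hd

theorem C_leadingCoeff_pow_mul_eq_zero_of_degree_mul_lt (hd : (g * h).degree < g.degree) :
    C g.leadingCoeff ^ (h.natDegree + 1) * h = 0 := by
  suffices ∀ n (h : R[X]), h.natDegree < n → (g * h).degree < g.degree →
      C g.leadingCoeff ^ n * h = 0 from this _ h (Nat.lt_succ_self _) hd
  intro n
  induction n with
  | zero => intro h hn; exact absurd hn (Nat.not_lt_zero _)
  | succ n ih =>
    intro h hn hd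
    rw [pow_succ, mul_assoc]
    by_cases hz : C g.leadingCoeff * h = 0
    · rw [hz, mul_zero]
    have hh : h ≠ 0 := by rintro rfl; simp at hz
    have hlt : (C g.leadingCoeff * h).natDegree < h.natDegree :=
      natDegree_lt_natDegree hz <| degree_C_mul_lt_of_mul_leadingCoeff_eq_zero
        (leadingCoeff_mul_leadingCoeff_eq_zero_of_degree_mul_lt hd) hh
    exact ih _ (by omega) (degree_mul_C_mul_lt_of_degree_mul_lt _ hd)

end Polynomial

open Polynomial in
theorem stmt_6 {R : Type*} [CommRing R] (f g h : R[X])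
    (hfgh : f = g * h) (hdeg : f.degree < g.degree) :
    Polynomial.C (g.leadingCoeff) ^ (h.natDegree + 1) * f = 0 := by
  subst hfgh
  rw [mul_left_comm, C_leadingCoeff_pow_mul_eq_zero_of_degree_mul_lt hdeg, mul_zero]
end

section
/- Let R be a reduced commutative unital ring and f ∈ R[x] a regular element. If g ∈ R[x] divides f, then deg(g) ≤ deg(f). In particular, every divisor of a regular constant element of R[x] is a constant. -/
/-!
Write `f = g * h` and pick a minimal prime `p` of `R` missing the leading coefficient of `g`,
which exists because `R` is reduced. Modulo `p` the degree of `g` is unchanged, and `h` does not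
vanish: otherwise every coefficient of `f` lies in the minimal prime `p`, so each is killed by an
element outside `p`, and the product of these elements is a nonzero constant killing `f`. Over the
domain `R ⧸ p` degrees add, so `deg g ≤ deg (f mod p) ≤ deg f`.
-/

open Polynomial

section

variable {R : Type*} [CommRing R] [IsReduced R]

theorem exists_mem_minimalPrimes_notMem {a : R} (ha : a ≠ 0) :
    ∃ p ∈ minimalPrimes R, a ∉ p := by
  by_contra! h
  have ha_rad : a ∈ (⊥ : Ideal R).radical := by
    rw [← Ideal.sInf_minimalPrimes]
    exact Submodule.mem_sInf.mpr h
  obtain ⟨n, hn⟩ := Ideal.mem_radical_iff.mp ha_rad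
  exact ha (IsNilpotent.eq_zero ⟨n, hn⟩)

theorem exists_mul_eq_zero_notMem_of_mem_minimalPrimes {p : Ideal R}
    (hp : p ∈ minimalPrimes R) {x : R} (hx : x ∈ p) : ∃ s ∉ p, s * x = 0 := by
  have : p.IsPrime := hp.isPrime
  -- As `p` is minimal, `p R_p` is the nilradical of the reduced ring `R_p`, so `x` vanishes there.
  have hx_rad : algebraMap R (Localization.AtPrime p) x ∈
      (Ideal.map (algebraMap R (Localization.AtPrime p)) (⊥ : Ideal R)).radical := by
    rw [IsLocalization.AtPrime.radical_map_of_mem_minimalPrimes _ p ⊥ hp]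
    exact Ideal.mem_map_of_mem _ hx
  rw [Ideal.map_bot] at hx_rad
  obtain ⟨n, hn⟩ := Ideal.mem_radical_iff.mp hx_rad
  have hx0 : algebraMap R (Localization.AtPrime p) x = 0 :=
    IsNilpotent.eq_zero ⟨n, Ideal.mem_bot.mp hn⟩
  obtain ⟨s, hs⟩ := (IsLocalization.map_eq_zero_iff p.primeCompl _ x).mp hx0
  exact ⟨s, s.2, hs⟩

namespace Polynomial

theorem exists_C_mul_eq_zero_of_coeff_mem_minimalPrimes {p : Ideal R}
    (hp : p ∈ minimalPrimes R) {f : R[X]} (hf : ∀ n, f.coeff n ∈ p) :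
    ∃ s ∉ p, C s * f = 0 := by
  have : p.IsPrime := hp.isPrime
  choose t htp ht using fun n ↦ exists_mul_eq_zero_notMem_of_mem_minimalPrimes hp (hf n)
  refine ⟨∏ n ∈ Finset.range (f.natDegree + 1), t n, ?_, ?_⟩
  · intro hmem
    obtain ⟨n, -, hn⟩ := Ideal.IsPrime.prod_mem_iff.mp hmem
    exact htp n hn
  · ext n
    rw [coeff_C_mul, coeff_zero]
    rcases le_or_gt n f.natDegree with hn | hn
    · rw [← Finset.mul_prod_erase _ _ (Finset.mem_range_succ_iff.mpr hn), mul_comm (t n),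
        mul_assoc, ht n, mul_zero]
    · rw [coeff_eq_zero_of_natDegree_lt hn, mul_zero]

theorem map_quotient_ne_zero_of_mem_nonZeroDivisors {p : Ideal R}
    (hp : p ∈ minimalPrimes R) {f : R[X]} (hf : f ∈ nonZeroDivisors R[X]) : f.map (Ideal.Quotient.mk p) ≠ 0 := by
  intro hf0
  have hcoeff : ∀ n, f.coeff n ∈ p := fun n ↦ by
    simpa [Ideal.Quotient.eq_zero_iff_mem] using congr_arg (coeff · n) hf0
  obtain ⟨s, hsp, hs⟩ := exists_C_mul_eq_zero_of_coeff_mem_minimalPrimes hp hcoeff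
  exact hsp (C_eq_zero.mp (hf.2 _ hs) ▸ p.zero_mem)

theorem degree_le_of_dvd_of_mem_nonZeroDivisors {f g : R[X]} (hgf : g ∣ f)
    (hf : f ∈ nonZeroDivisors R[X]) : g.degree ≤ f.degree := by
  obtain ⟨h, rfl⟩ := hgf
  rcases eq_or_ne g 0 with rfl | hg
  · simp
  obtain ⟨p, hp, hgp⟩ := exists_mem_minimalPrimes_notMem (leadingCoeff_ne_zero.mpr hg)
  have : p.IsPrime := hp.isPrime
  let q := Ideal.Quotient.mk p
  have hg_deg : (g.map q).degree = g.degree :=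
    degree_map_eq_of_leadingCoeff_ne_zero _ (by rwa [Ne, Ideal.Quotient.eq_zero_iff_mem])
  have hh : h.map q ≠ 0 := by
    refine right_ne_zero_of_mul (a := g.map q) ?_
    rw [← Polynomial.map_mul]
    exact map_quotient_ne_zero_of_mem_nonZeroDivisors hp hf
  calc g.degree = (g.map q).degree := hg_deg.symm
    _ ≤ (g.map q * h.map q).degree := degree_le_mul_left _ hh
    _ = ((g * h).map q).degree := by rw [Polynomial.map_mul]
    _ ≤ (g * h).degree := degree_map_le

end Polynomial

end

open Polynomial in
theorem stmt_7 {R : Type*} [CommRing R] [IsReduced R] (f : R[X])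
    (hf : f ∈ nonZeroDivisors R[X]) :
    (∀ g : R[X], g ∣ f → g.degree ≤ f.degree) ∧
      (∀ a : R, f = Polynomial.C a → ∀ g : R[X], g ∣ f → ∃ b : R, g = Polynomial.C b) := by
  have hdeg (g : R[X]) (hgf : g ∣ f) : g.degree ≤ f.degree :=
    degree_le_of_dvd_of_mem_nonZeroDivisors hgf hf
  refine ⟨hdeg, fun a hfa g hgf ↦ ⟨g.coeff 0, eq_C_of_degree_le_zero ?_⟩⟩
  exact (hdeg g hgf).trans (hfa ▸ degree_C_le)
end

section
/- Let R be a commutative unital ring and g, h ∈ R[x] with x^r = g·h. Then g_0^r = g_0^{r+1}·h_r, where g_0 is the constant coefficient of g and h_r the degree-r coefficient of h. -/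
open Polynomial Finset in
lemma aux_8 {R : Type*} [CommRing R] (g h : R[X]) (r : ℕ)
    (hgh : (X : R[X]) ^ r = g * h) :
    ∀ k, k < r → g.coeff 0 ^ (k + 1) * h.coeff k = 0 := by
  intro k
  induction k using Nat.strong_induction_on with
  | _ k ih =>
    intro hk
    have h0 : (g * h).coeff k = 0 := by
      rw [← hgh, coeff_X_pow, if_neg (Nat.ne_of_lt hk)]
    rw [coeff_mul, Finset.Nat.sum_antidiagonal_eq_sum_range_succ_mk,
      Finset.sum_range_succ'] at h0
    simp only [Nat.sub_zero] at h0
    have h1 : g.coeff 0 * h.coeff k =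
        -∑ i ∈ range k, g.coeff (i + 1) * h.coeff (k - (i + 1)) := by
      linear_combination h0
    have h2 : g.coeff 0 ^ (k + 1) * h.coeff k =
        -∑ i ∈ range k, g.coeff 0 ^ k * (g.coeff (i + 1) * h.coeff (k - (i + 1))) := by
      rw [pow_succ, mul_assoc, h1, mul_neg, Finset.mul_sum]
    rw [h2, neg_eq_zero]
    apply Finset.sum_eq_zero
    intro i hi
    have hi' : i < k := Finset.mem_range.mp hi
    have hlt : k - (i + 1) < k := by omega
    have := ih (k - (i + 1)) hlt (lt_trans hlt hk)
    have hkeq : k = (i + 1) + (k - (i + 1) + 1) - 1 := by omega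
    have : g.coeff 0 ^ k * h.coeff (k - (i + 1)) = 0 := by
      have hsplit : g.coeff 0 ^ k = g.coeff 0 ^ (k - (k - (i + 1) + 1)) *
          g.coeff 0 ^ (k - (i + 1) + 1) := by
        rw [← pow_add]; congr 1; omega
      rw [hsplit, mul_assoc, this, mul_zero]
    calc g.coeff 0 ^ k * (g.coeff (i + 1) * h.coeff (k - (i + 1)))
        = g.coeff (i + 1) * (g.coeff 0 ^ k * h.coeff (k - (i + 1))) := by ring
      _ = 0 := by rw [this, mul_zero]

open Polynomial Finset in
theorem stmt_8 {R : Type*} [CommRing R] (g h : R[X]) (r : ℕ)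
    (hgh : (X : R[X]) ^ r = g * h) :
    g.coeff 0 ^ r = g.coeff 0 ^ (r + 1) * h.coeff r := by
  have h0 : (g * h).coeff r = 1 := by
    rw [← hgh, coeff_X_pow, if_pos rfl]
  rw [coeff_mul, Finset.Nat.sum_antidiagonal_eq_sum_range_succ_mk,
    Finset.sum_range_succ'] at h0
  simp only [Nat.sub_zero] at h0
  have h2 : g.coeff 0 ^ r * ((∑ i ∈ range r, g.coeff (i + 1) * h.coeff (r - (i + 1))) +
      g.coeff 0 * h.coeff r) = g.coeff 0 ^ r * 1 := by rw [h0]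
  rw [mul_add, mul_one] at h2
  have h3 : ∑ i ∈ range r, g.coeff 0 ^ r * (g.coeff (i + 1) * h.coeff (r - (i + 1))) = 0 := by
    apply Finset.sum_eq_zero
    intro i hi
    have hi' : i < r := Finset.mem_range.mp hi
    have hlt : r - (i + 1) < r := by omega
    have hz := aux_8 g h r hgh (r - (i + 1)) hlt
    have : g.coeff 0 ^ r * h.coeff (r - (i + 1)) = 0 := by
      have hsplit : g.coeff 0 ^ r = g.coeff 0 ^ (r - (r - (i + 1) + 1)) *
          g.coeff 0 ^ (r - (i + 1) + 1) := by
        rw [← pow_add]; congr 1; omega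
      rw [hsplit, mul_assoc, hz, mul_zero]
    calc g.coeff 0 ^ r * (g.coeff (i + 1) * h.coeff (r - (i + 1)))
        = g.coeff (i + 1) * (g.coeff 0 ^ r * h.coeff (r - (i + 1))) := by ring
      _ = 0 := by rw [this, mul_zero]
  rw [Finset.mul_sum, h3, zero_add] at h2
  rw [← h2, pow_succ]
  ring
end

section
/- Let R be a reduced indecomposable commutative unital ring and c ∈ R a nonzero nonunit. Then all nonnegative powers of c are pairwise distinct; in particular R is infinite. -/
/-!
If `c ^ m = c ^ n` with `m < n`, the powers of `c` are eventually periodic, and a power `c ^ N`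
with `N ≥ m` a positive multiple of the period is idempotent. Indecomposability forces
`c ^ N = 0`, so `c` is nilpotent and hence zero, or `c ^ N = 1`, so `c` is a unit.
-/

section Monoid

variable {M : Type*} [Monoid M]

theorem pow_add_mul_eq_of_pow_add_eq {c : M} {m k : ℕ} (h : c ^ (m + k) = c ^ m) (j : ℕ) :
    c ^ (m + k * j) = c ^ m := by
  induction j with
  | zero => simp
  | succ j ih => rw [mul_add_one, ← add_assoc, pow_add, ih, ← pow_add, h]

theorem exists_isIdempotentElem_pow_of_pow_eq_pow {c : M} {m n : ℕ} (hmn : m < n)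
    (h : c ^ m = c ^ n) : ∃ N, 0 < N ∧ IsIdempotentElem (c ^ N) := by
  obtain ⟨k, rfl⟩ := Nat.exists_eq_add_of_lt hmn
  set N := (k + 1) * (m + 1)
  have hmN : m ≤ N := m.le_succ.trans (Nat.le_mul_of_pos_left _ k.succ_pos)
  refine ⟨N, by positivity, ?_⟩
  have hperiod : c ^ (m + N) = c ^ m :=
    pow_add_mul_eq_of_pow_add_eq (by rw [← add_assoc, h]) (m + 1)
  calc c ^ N * c ^ N = c ^ (N - m) * c ^ (m + N) := by
        rw [← pow_add, ← pow_add, ← add_assoc, Nat.sub_add_cancel hmN]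
    _ = c ^ N := by rw [hperiod, ← pow_add, Nat.sub_add_cancel hmN]

end Monoid

theorem eq_zero_or_isUnit_of_isIdempotentElem_pow {M : Type*} [MonoidWithZero M] [IsReduced M]
    (hind : ∀ e : M, IsIdempotentElem e → e = 0 ∨ e = 1) {c : M} {N : ℕ} (hN : 0 < N)
    (he : IsIdempotentElem (c ^ N)) : c = 0 ∨ IsUnit c :=
  (hind _ he).imp (fun h0 ↦ IsNilpotent.eq_zero ⟨N, h0⟩) (IsUnit.of_pow_eq_one · hN.ne')

theorem pow_injective_of_indecomposable {M : Type*} [MonoidWithZero M] [IsReduced M]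
    (hind : ∀ e : M, IsIdempotentElem e → e = 0 ∨ e = 1) {c : M} (hc0 : c ≠ 0)
    (hcu : ¬IsUnit c) : Function.Injective (c ^ · : ℕ → M) := by
  refine .of_lt_imp_ne fun m n hmn h ↦ ?_
  obtain ⟨N, hN, he⟩ := exists_isIdempotentElem_pow_of_pow_eq_pow hmn h
  exact (eq_zero_or_isUnit_of_isIdempotentElem_pow hind hN he).elim hc0 hcu

theorem stmt_12 {R : Type*} [CommRing R] [IsReduced R]
    (hind : ∀ e : R, IsIdempotentElem e → e = 0 ∨ e = 1)
    (c : R) (hc0 : c ≠ 0) (hcu : ¬IsUnit c) :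
    (∀ m n : ℕ, c ^ m = c ^ n → m = n) ∧ Infinite R :=
  have hinj := pow_injective_of_indecomposable hind hc0 hcu
  ⟨fun _ _ ↦ @hinj _ _, .of_injective _ hinj⟩
end

section
/- Let R be an infinite reduced indecomposable commutative unital ring and f ∈ R[x]. If f(c) = 0 for every c ∈ R, then f = 0. -/
/-!
Let `a` be the leading coefficient of `f`, `n` its degree and `m = n!`. For every prime `p` not
containing `a`, `f` stays nonzero in the domain `R ⧸ p` and vanishes on it, so `R ⧸ p` is a field
with at most `n` elements and satisfies `x ^ (m + 1) = x`. Hence `a * (c ^ (m + 1) - c)` lies in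
every prime and, `R` being reduced, vanishes. For `c = a` this forces `a ^ (m + 1) = a`, so `a ^ m`
is idempotent and `a` is a unit; then `c ^ (m + 1) = c` for all `c`, and the same idempotent
argument makes `R` a field. An infinite field carries no nonzero polynomial function.
-/

open Polynomial Cardinal
open scoped Nat

theorem pow_succ_eq_self_of_card_sub_one_dvd {K : Type*} [GroupWithZero K] [Finite K] {m : ℕ}
    (hm : Nat.card K - 1 ∣ m) (x : K) : x ^ (m + 1) = x := by
  have := Fintype.ofFinite K
  rcases eq_or_ne x 0 with rfl | hx
  · exact zero_pow m.succ_ne_zero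
  obtain ⟨k, rfl⟩ := hm
  rw [pow_succ, pow_mul, Nat.card_eq_fintype_card, FiniteField.pow_card_sub_one_eq_one x hx,
    one_pow, one_mul]

theorem pow_factorial_succ_eq_self_of_forall_eval_eq_zero {D : Type*} [CommRing D] [IsDomain D]
    {g : D[X]} (hg : g ≠ 0) (heval : ∀ x, g.eval x = 0) {n : ℕ} (hn : g.natDegree ≤ n) (x : D) :
    x ^ (n ! + 1) = x := by
  have hcard : #D ≤ n :=
    (not_lt.mp (mt (eq_zero_of_forall_eval_zero_of_natDegree_lt_card g heval) hg)).trans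
      (Nat.cast_le.mpr hn)
  have : Finite D := lt_aleph0_iff_finite.mp (hcard.trans_lt natCast_lt_aleph0)
  classical
  have := Fintype.ofFinite D
  let := Fintype.fieldOfDomain D
  have hcard' : Nat.card D ≤ n := by
    rwa [← Nat.cast_le (α := Cardinal), Nat.cast_card]
  exact pow_succ_eq_self_of_card_sub_one_dvd
    (Nat.dvd_factorial (Nat.sub_pos_of_lt Finite.one_lt_card) (by omega)) x

theorem leadingCoeff_mul_pow_factorial_succ_sub_mem_of_isPrime {R : Type*} [CommRing R]
    {f : R[X]} (hf : ∀ c, f.eval c = 0) (p : Ideal R) [p.IsPrime] (c : R) :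
    f.leadingCoeff * (c ^ (f.natDegree ! + 1) - c) ∈ p := by
  by_cases ha : f.leadingCoeff ∈ p
  · exact p.mul_mem_right _ ha
  refine p.mul_mem_left _ (Ideal.Quotient.eq_zero_iff_mem.mp ?_)
  have hmap : f.map (Ideal.Quotient.mk p) ≠ 0 := fun h ↦ ha <| by
    simpa [← Ideal.Quotient.eq_zero_iff_mem] using congr_arg (coeff · f.natDegree) h
  have hvanish (x : R ⧸ p) : (f.map (Ideal.Quotient.mk p)).eval x = 0 := by
    obtain ⟨c, rfl⟩ := Ideal.Quotient.mk_surjective x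
    rw [eval_map, eval₂_at_apply, hf, map_zero]
  rw [map_sub, map_pow, pow_factorial_succ_eq_self_of_forall_eval_eq_zero hmap hvanish
    natDegree_map_le, sub_self]

theorem leadingCoeff_mul_pow_factorial_succ_sub_eq_zero {R : Type*} [CommRing R] [IsReduced R]
    {f : R[X]} (hf : ∀ c, f.eval c = 0) (c : R) :
    f.leadingCoeff * (c ^ (f.natDegree ! + 1) - c) = 0 :=
  IsReduced.eq_zero _ <| (nilpotent_iff_mem_prime).mpr fun p _ ↦
    leadingCoeff_mul_pow_factorial_succ_sub_mem_of_isPrime hf p c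

theorem IsReduced.eq_zero_of_mul_eq_zero_of_dvd {R : Type*} [CommMonoidWithZero R] [IsReduced R]
    {a b : R} (hab : a * b = 0) (hdvd : a ∣ b) : b = 0 := by
  obtain ⟨z, rfl⟩ := hdvd
  exact IsReduced.eq_zero _ ⟨2, by rw [sq, mul_right_comm, hab, zero_mul]⟩

theorem eq_zero_or_isUnit_of_pow_succ_eq_self {M : Type*} [MonoidWithZero M]
    (hind : ∀ e : M, IsIdempotentElem e → e = 0 ∨ e = 1) {a : M} {m : ℕ} (hm : m ≠ 0)
    (ha : a ^ (m + 1) = a) : a = 0 ∨ IsUnit a := by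
  have hidem : IsIdempotentElem (a ^ m) := by
    obtain ⟨k, rfl⟩ := Nat.exists_eq_add_one_of_ne_zero hm
    rw [IsIdempotentElem, ← pow_add, show k + 1 + (k + 1) = k + (k + 1 + 1) by ring, pow_add, ha,
      ← pow_succ]
  refine (hind _ hidem).imp (fun h0 ↦ ?_) (IsUnit.of_pow_eq_one · hm)
  rw [← ha, pow_succ, h0, zero_mul]

open Polynomial in
theorem stmt_14 {R : Type*} [CommRing R] [Infinite R] [IsReduced R]
    (hind : ∀ e : R, IsIdempotentElem e → e = 0 ∨ e = 1)
    (f : R[X]) (hf : ∀ c : R, f.eval c = 0) :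
    f = 0 := by
  by_contra hf0
  set a := f.leadingCoeff
  set m := f.natDegree.factorial
  have hvanish := leadingCoeff_mul_pow_factorial_succ_sub_eq_zero hf
  have hm : m ≠ 0 := f.natDegree.factorial_ne_zero
  have haa : a ^ (m + 1) = a := sub_eq_zero.mp <| IsReduced.eq_zero_of_mul_eq_zero_of_dvd (hvanish a)
    (dvd_sub (dvd_pow_self a m.succ_ne_zero) dvd_rfl)
  have ha : IsUnit a := (eq_zero_or_isUnit_of_pow_succ_eq_self hind hm haa).resolve_left
    (leadingCoeff_ne_zero.mpr hf0)
  have hfield : IsField R := by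
    refine ⟨exists_pair_ne R, mul_comm, fun {c} hc ↦ ?_⟩
    have hcc : c ^ (m + 1) = c := sub_eq_zero.mp (ha.mul_right_eq_zero.mp (hvanish c))
    exact ((eq_zero_or_isUnit_of_pow_succ_eq_self hind hm hcc).resolve_left hc).exists_right_inv
  have := hfield.isDomain
  exact hf0 (zero_of_eval_zero f hf)
end

section
/- Let R be a reduced commutative unital ring and p ∈ R[x] a nonconstant polynomial. Then no logical power of p in R[x] is infinitely divisible by p. If in addition the leading coefficient of p is regular, then every logical power of p is a positive power of p. -/
open Polynomial nonZeroDivisors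

namespace Polynomial

variable {R : Type*} [CommRing R] {p q f : R[X]}

theorem natDegree_mul_of_leadingCoeff_mem_nonZeroDivisors (hp : p.leadingCoeff ∈ R⁰)
    (hq : q ≠ 0) : (p * q).natDegree = p.natDegree + q.natDegree :=
  natDegree_mul' <| by
    rwa [Ne, mul_comm, mul_right_mem_nonZeroDivisors_eq_zero_iff hp, leadingCoeff_eq_zero]

theorem natDegree_le_of_dvd_of_leadingCoeff_mem_nonZeroDivisors (hp : p.leadingCoeff ∈ R⁰)
    (hpf : p ∣ f) (hf : f ≠ 0) : p.natDegree ≤ f.natDegree := by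
  obtain ⟨q, rfl⟩ := hpf
  rw [natDegree_mul_of_leadingCoeff_mem_nonZeroDivisors hp (right_ne_zero_of_mul hf)]
  exact Nat.le_add_right _ _

theorem leadingCoeff_pow_mem_nonZeroDivisors (hp : p.leadingCoeff ∈ R⁰) (n : ℕ) :
    (p ^ n).leadingCoeff ∈ R⁰ := by
  nontriviality R
  rw [leadingCoeff_pow' (nonZeroDivisors.ne_zero (pow_mem hp n))]
  exact pow_mem hp n

theorem le_natDegree_of_pow_dvd (hp : p.leadingCoeff ∈ R⁰) (hdeg : 0 < p.natDegree)
    (hf : f ≠ 0) {n : ℕ} (hpn : p ^ n ∣ f) : n ≤ f.natDegree := by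
  have : Nontrivial R := nontrivial_iff.mp (nontrivial_of_ne f 0 hf)
  calc n ≤ n * p.natDegree := Nat.le_mul_of_pos_right n hdeg
    _ = (p ^ n).natDegree := (natDegree_pow' (nonZeroDivisors.ne_zero (pow_mem hp n))).symm
    _ ≤ f.natDegree := natDegree_le_of_dvd_of_leadingCoeff_mem_nonZeroDivisors
        (leadingCoeff_pow_mem_nonZeroDivisors hp n) hpn hf

theorem finiteMultiplicity_of_leadingCoeff_mem_nonZeroDivisors (hp : p.leadingCoeff ∈ R⁰)
    (hdeg : 0 < p.natDegree) (hf : f ≠ 0) : FiniteMultiplicity p f :=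
  FiniteMultiplicity.def.mpr
    ⟨f.natDegree, fun h => by have := le_natDegree_of_pow_dvd hp hdeg hf h; omega⟩

theorem eq_zero_of_forall_pow_dvd (hp : p.leadingCoeff ∈ R⁰) (hdeg : 0 < p.natDegree)
    (h : ∀ n, p ^ n ∣ f) : f = 0 := by
  by_contra hf
  have := le_natDegree_of_pow_dvd hp hdeg hf (h (f.natDegree + 1))
  omega

theorem not_isUnit_of_leadingCoeff_mem_nonZeroDivisors (hp : p.leadingCoeff ∈ R⁰)
    (hdeg : 0 < p.natDegree) : ¬IsUnit p := fun hu => by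
  have : Nontrivial R := nontrivial_iff.mp (nontrivial_of_ne p 0 (ne_zero_of_natDegree_gt hdeg))
  have := natDegree_le_of_dvd_of_leadingCoeff_mem_nonZeroDivisors hp hu.dvd one_ne_zero
  rw [natDegree_one] at this
  omega

theorem natDegree_sub_one (p : R[X]) : (p - 1).natDegree = p.natDegree := by
  simpa using natDegree_sub_C (p := p) (a := 1)

theorem leadingCoeff_sub_one (hdeg : 0 < p.natDegree) : (p - 1).leadingCoeff = p.leadingCoeff :=
  leadingCoeff_sub_of_degree_lt <| degree_one_le.trans_lt (natDegree_pos_iff_degree_pos.mp hdeg)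

theorem not_forall_pow_dvd_of_sub_one_dvd_sub_one (hp : p.leadingCoeff ∈ R⁰)
    (hdeg : 0 < p.natDegree) (hf : p - 1 ∣ f - 1) : ¬∀ n, p ^ n ∣ f := fun h => by
  rw [eq_zero_of_forall_pow_dvd hp hdeg h, zero_sub] at hf
  refine not_isUnit_of_leadingCoeff_mem_nonZeroDivisors (p := p - 1) ?_ ?_
    (isUnit_of_dvd_unit hf isUnit_one.neg)
  · rwa [leadingCoeff_sub_one hdeg]
  · rwa [natDegree_sub_one]

theorem eq_one_of_sub_one_dvd_C_sub_one (hp : p.leadingCoeff ∈ R⁰) (hdeg : 0 < p.natDegree)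
    {u : R} (hu : p - 1 ∣ C u - 1) : u = 1 := by
  by_contra hne
  have hu' : p - 1 ∣ C (u - 1) := by rwa [C_sub, C_1]
  have := natDegree_le_of_dvd_of_leadingCoeff_mem_nonZeroDivisors
    (by rwa [leadingCoeff_sub_one hdeg]) hu' (C_ne_zero.mpr (sub_ne_zero.mpr hne))
  rw [natDegree_sub_one, natDegree_C] at this
  omega

theorem eq_C_of_isUnit_of_isReduced [IsReduced R] (hp : IsUnit p) : p = C (p.coeff 0) :=
  eq_C_of_natDegree_eq_zero <| Nat.eq_zero_of_not_pos fun h =>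
    not_isUnit_of_natDegree_pos_of_isReduced p h hp

theorem not_forall_pow_dvd_of_isReduced [IsReduced R] (hdeg : 0 < p.natDegree)
    (hf : p - 1 ∣ f - 1) : ¬∀ n, p ^ n ∣ f := by
  obtain ⟨P, hP, hlc⟩ : ∃ P : Ideal R, P.IsPrime ∧ p.leadingCoeff ∉ P := by
    by_contra! h
    exact leadingCoeff_ne_zero.mpr (ne_zero_of_natDegree_gt hdeg)
      (nilpotent_iff_mem_prime.mpr h).eq_zero
  have hlc' : Ideal.Quotient.mk P p.leadingCoeff ≠ 0 := by
    rwa [Ne, Ideal.Quotient.eq_zero_iff_mem]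
  have hdeg' : 0 < (p.map (Ideal.Quotient.mk P)).natDegree := by
    rwa [natDegree_map_of_leadingCoeff_ne_zero _ hlc']
  have hreg : (p.map (Ideal.Quotient.mk P)).leadingCoeff ∈ (R ⧸ P)⁰ :=
    mem_nonZeroDivisors_of_ne_zero (by rwa [leadingCoeff_map_of_leadingCoeff_ne_zero _ hlc'])
  have hf' : p.map (Ideal.Quotient.mk P) - 1 ∣ f.map (Ideal.Quotient.mk P) - 1 := by
    simpa only [Polynomial.map_sub, Polynomial.map_one] using
      Polynomial.map_dvd (Ideal.Quotient.mk P) hf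
  exact fun h => not_forall_pow_dvd_of_sub_one_dvd_sub_one hreg hdeg' hf' fun n => by
    simpa only [Polynomial.map_pow] using Polynomial.map_dvd (Ideal.Quotient.mk P) (h n)

end Polynomial

theorem IsLogPow.exists_eq_pow {R : Type*} [CommRing R] [IsReduced R] {p f : R[X]}
    (hp : p.leadingCoeff ∈ R⁰) (hdeg : 0 < p.natDegree) (hf : IsLogPow p f) :
    ∃ n : ℕ, 1 ≤ n ∧ f = p ^ n := by
  obtain ⟨hpf, hsub, hdvd⟩ := hf
  have hf0 : f ≠ 0 := by
    rintro rfl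
    exact not_forall_pow_dvd_of_sub_one_dvd_sub_one hp hdeg hsub fun n => dvd_zero _
  obtain ⟨q, hfq, hpq⟩ := (finiteMultiplicity_of_leadingCoeff_mem_nonZeroDivisors hp hdeg
    hf0).exists_eq_pow_mul_and_not_dvd
  have hm : multiplicity p f ≠ 0 := multiplicity_ne_zero.mpr hpf
  generalize multiplicity p f = m at hm hfq
  subst hfq
  have hq : IsUnit q := (hdvd q (dvd_mul_left q _)).resolve_right hpq
  obtain ⟨u, rfl⟩ : ∃ u, q = C u := ⟨_, eq_C_of_isUnit_of_isReduced hq⟩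
  have hu : u = 1 := by
    refine eq_one_of_sub_one_dvd_C_sub_one hp hdeg ?_
    have hpow := (sub_one_dvd_pow_sub_one p m).mul_right (C u)
    rw [show C u - 1 = (p ^ m * C u - 1) - (p ^ m - 1) * C u by ring]
    exact dvd_sub hsub hpow
  exact ⟨m, Nat.one_le_iff_ne_zero.mpr hm, by rw [hu, C_1, mul_one]⟩

open Polynomial in
theorem stmt_16 {R : Type*} [CommRing R] [IsReduced R]
    (p : R[X]) (hp : 0 < p.natDegree) :
    (∀ f : R[X], IsLogPow p f → ¬∀ n : ℕ, 1 ≤ n → p ^ n ∣ f) ∧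
      (p.leadingCoeff ∈ nonZeroDivisors R →
        ∀ f : R[X], IsLogPow p f → ∃ n : ℕ, 1 ≤ n ∧ f = p ^ n) :=
  ⟨fun _ hf h => not_forall_pow_dvd_of_isReduced hp hf.2.1 fun n =>
      (pow_dvd_pow p n.le_succ).trans (h (n + 1) n.succ_pos),
    fun hlc _ hf => hf.exists_eq_pow hlc hp⟩
end

section
/- Let R be a commutative unital ring that is reduced or indecomposable, and let p ∈ R[x]. If some logical power of p is a multiple of its own square, then p is a unit. Consequently, if p is a logical power of itself, then p is a unit or irreducible. -/
open Polynomial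

theorem IsIdempotentElem.add_one_sub_mul_dvd {S : Type*} [CommRing S] {e : S}
    (he : IsIdempotentElem e) (b : S) : e + (1 - e) * b ∣ e :=
  ⟨e, by linear_combination (b - 1) * he.eq⟩

theorem exists_isIdempotentElem_dvd_of_sq_dvd {S : Type*} [CommMonoid S] {f : S}
    (hf : f ^ 2 ∣ f) : ∃ e, IsIdempotentElem e ∧ e ∣ f ∧ f ∣ e := by
  obtain ⟨g, hg⟩ := hf
  refine ⟨f * g, ?_, ⟨f, ?_⟩, dvd_mul_right f g⟩
  · calc f * g * (f * g) = f ^ 2 * g * g := by rw [sq]; ac_rfl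
      _ = f * g := by rw [← hg]
  · calc f = f ^ 2 * g := hg
      _ = f * g * f := by rw [sq]; ac_rfl

namespace Polynomial

variable {R : Type*} [CommRing R]

theorem eq_C_coeff_zero_of_isIdempotentElem {e : R[X]} (he : IsIdempotentElem e) :
    e = C (e.coeff 0) := by
  refine eq_of_isNilpotent_sub_of_isIdempotentElem he ((he.map (constantCoeff (R := R))).map C) ?_
  refine Polynomial.isNilpotent_iff.2 fun n => ?_
  rcases n with _ | n
  · simp
  rw [coeff_sub, coeff_C_succ, sub_zero, nilpotent_iff_mem_prime]
  -- over the domain `R ⧸ P` the image of `e` is `0` or `1`, so its higher coefficients vanish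
  intro P hP
  have hmap : IsIdempotentElem (e.map (Ideal.Quotient.mk P)) := he.map (mapRingHom _)
  rw [← Ideal.Quotient.eq_zero_iff_mem, ← coeff_map]
  rcases IsIdempotentElem.iff_eq_zero_or_one.1 hmap with h | h <;> simp [h, coeff_one]

theorem eq_one_of_isUnit_add_one_sub_mul {e : R[X]} (he : IsIdempotentElem e) (a : R)
    (hu : IsUnit (e + (1 - e) * (C a + X))) : e = 1 := by
  set c := e.coeff 0
  have hform : e + (1 - e) * (C a + X) = C (c + (1 - c) * a) + X * (1 - e) := by
    rw [eq_C_coeff_zero_of_isIdempotentElem he]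
    simp only [map_add, map_mul, map_sub, map_one]
    ring
  rw [hform, isUnit_C_add_X_mul_iff] at hu
  exact (sub_eq_zero.1 (he.one_sub.eq_zero_of_isNilpotent hu.2)).symm

end Polynomial

theorem IsLogPow.isUnit_of_sq_dvd {R : Type*} [CommRing R] {p f : R[X]} (h : IsLogPow p f)
    (hf : f ^ 2 ∣ f) : IsUnit p := by
  obtain ⟨e, he, hef, hfe⟩ := exists_isIdempotentElem_dvd_of_sq_dvd hf
  have hpe : p ∣ e := h.1.trans hfe
  have hdvd (a : R) : p ∣ e + (1 - e) * (C a + X) ∨ e = 1 :=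
    (h.2.2 _ ((he.add_one_sub_mul_dvd _).trans hef)).symm.imp_right
      (eq_one_of_isUnit_add_one_sub_mul he a)
  refine isUnit_of_dvd_one ?_
  by_cases he1 : e = 1
  · exact he1 ▸ hpe
  calc p ∣ e + ((e + (1 - e) * (C 1 + X)) - (e + (1 - e) * (C 0 + X))) :=
        dvd_add hpe (dvd_sub ((hdvd 1).resolve_right he1) ((hdvd 0).resolve_right he1))
    _ = 1 := by simp only [map_one, map_zero]; ring

theorem irreducible_of_forall_dvd {S : Type*} [CommMonoid S] {p : S} (hp : ¬IsUnit p)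
    (hsq : ¬p ^ 2 ∣ p) (h : ∀ g, g ∣ p → IsUnit g ∨ p ∣ g) : Irreducible p := by
  refine irreducible_iff.2 ⟨hp, fun a b hab => ?_⟩
  rcases h a (hab ▸ dvd_mul_right a b) with ha | ha
  · exact .inl ha
  rcases h b (hab ▸ dvd_mul_left b a) with hb | hb
  · exact .inr hb
  have hpp : p * p ∣ a * b := mul_dvd_mul ha hb
  rw [← hab, ← sq] at hpp
  exact absurd hpp hsq

open Polynomial in
theorem stmt_17_general {R : Type*} [CommRing R]
    (p : R[X]) :
    ((∃ f : R[X], IsLogPow p f ∧ f ^ 2 ∣ f) → IsUnit p) ∧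
      (IsLogPow p p → IsUnit p ∨ Irreducible p) := by
  refine ⟨fun ⟨f, hf, hsq⟩ => hf.isUnit_of_sq_dvd hsq, fun hp => ?_⟩
  by_cases hu : IsUnit p
  · exact .inl hu
  · exact .inr (irreducible_of_forall_dvd hu (fun hsq => hu (hp.isUnit_of_sq_dvd hsq)) hp.2.2)

open Polynomial in
theorem stmt_17 {R : Type*} [CommRing R] [Nontrivial R]
    (hR : IsReduced R ∨ ∀ e : R, IsIdempotentElem e → e = 0 ∨ e = 1)
    (p : R[X]) :
    ((∃ f : R[X], IsLogPow p f ∧ f ^ 2 ∣ f) → IsUnit p) ∧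
      (IsLogPow p p → IsUnit p ∨ Irreducible p) :=
  stmt_17_general p
end

section
/- Let R be a reduced indecomposable commutative unital ring. Then in R[x], the set of logical powers of x equals the set of positive powers of x: f is a logical power of x if and only if f = x^n for some n ≥ 1. -/
open Polynomial

theorem exists_eq_one_of_sum_eq_one_of_pairwise_mul_eq_zero {R ι : Type*} [Semiring R]
    [Nontrivial R] (hind : ∀ e : R, IsIdempotentElem e → e = 0 ∨ e = 1)
    {s : Finset ι} {e : ι → R} (hsum : ∑ i ∈ s, e i = 1)
    (horth : (s : Set ι).Pairwise fun i j => e i * e j = 0) : ∃ i ∈ s, e i = 1 := by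
  have hidem : ∀ i ∈ s, IsIdempotentElem (e i) := fun i hi => by
    calc e i * e i = e i * ∑ j ∈ s, e j := by
          rw [Finset.mul_sum, Finset.sum_eq_single_of_mem i hi]
          exact fun j hj hji => horth hi hj hji.symm
      _ = e i := by rw [hsum, mul_one]
  by_contra! hne
  have hzero : ∑ i ∈ s, e i = 0 :=
    Finset.sum_eq_zero fun i hi => (hind _ (hidem i hi)).resolve_right (hne i hi)
  exact zero_ne_one (hzero.symm.trans hsum)

namespace Polynomial

open Finset

variable {R : Type*} [CommRing R]

theorem exists_eq_C_mul_X_pow_of_dvd_X_pow_of_isDomain [IsDomain R] {g : R[X]} {n : ℕ}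
    (hg : g ∣ X ^ n) : ∃ (c : R) (k : ℕ), g = C c * X ^ k := by
  obtain ⟨k, -, u, hu⟩ := (dvd_prime_pow prime_X n).mp hg
  obtain ⟨c, -, hc⟩ := Polynomial.isUnit_iff.mp (u⁻¹ : R[X]ˣ).isUnit
  exact ⟨c, k, by rw [← hu, mul_comm, mul_assoc, hc, Units.mul_inv, mul_one]⟩

theorem coeff_mul_coeff_eq_zero_of_dvd_X_pow [IsReduced R] {g : R[X]} {n : ℕ}
    (hg : g ∣ X ^ n) {i j : ℕ} (hij : i ≠ j) : g.coeff i * g.coeff j = 0 := by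
  refine IsReduced.eq_zero _ (nilpotent_iff_mem_prime.mpr fun P hP => ?_)
  have hmap : g.map (Ideal.Quotient.mk P) ∣ X ^ n := by
    simpa using Polynomial.map_dvd (Ideal.Quotient.mk P) hg
  obtain ⟨c, k, hck⟩ := exists_eq_C_mul_X_pow_of_dvd_X_pow_of_isDomain hmap
  have hi := congrArg (coeff · i) hck
  have hj := congrArg (coeff · j) hck
  simp only [coeff_map, coeff_C_mul_X_pow] at hi hj
  rw [← Ideal.Quotient.eq_zero_iff_mem, map_mul, hi, hj]
  split_ifs <;> simp_all

theorem exists_eq_C_mul_X_pow_of_dvd_X_pow [IsReduced R] [Nontrivial R]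
    (hind : ∀ e : R, IsIdempotentElem e → e = 0 ∨ e = 1) {g : R[X]} {n : ℕ}
    (hg : g ∣ X ^ n) : ∃ (u : R) (k : ℕ), IsUnit u ∧ g = C u * X ^ k := by
  obtain ⟨h, hgh⟩ := hg
  have hsum : ∑ x ∈ antidiagonal n, g.coeff x.1 * h.coeff x.2 = 1 := by
    rw [← coeff_mul, ← hgh, coeff_X_pow_self]
  have horth : (antidiagonal n : Set (ℕ × ℕ)).Pairwise
      fun x y => g.coeff x.1 * h.coeff x.2 * (g.coeff y.1 * h.coeff y.2) = 0 := by
    intro x hx y hy hxy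
    have hxy1 : x.1 ≠ y.1 := fun h1 => hxy (HasAntidiagonal.antidiagonal_congr hx hy |>.mpr h1)
    rw [mul_mul_mul_comm, coeff_mul_coeff_eq_zero_of_dvd_X_pow ⟨h, hgh⟩ hxy1, zero_mul]
  obtain ⟨⟨k, m⟩, -, hkm⟩ := exists_eq_one_of_sum_eq_one_of_pairwise_mul_eq_zero hind hsum horth
  refine ⟨g.coeff k, k, IsUnit.of_mul_eq_one _ hkm, Polynomial.ext fun j => ?_⟩
  rw [coeff_C_mul_X_pow]
  split_ifs with hjk
  · rw [hjk]
  · calc g.coeff j = g.coeff j * g.coeff k * h.coeff m := by rw [mul_assoc, hkm, mul_one]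
      _ = 0 := by rw [coeff_mul_coeff_eq_zero_of_dvd_X_pow ⟨h, hgh⟩ hjk, zero_mul]

theorem isLogPow_X_pow [IsReduced R] (hind : ∀ e : R, IsIdempotentElem e → e = 0 ∨ e = 1)
    {n : ℕ} (hn : 1 ≤ n) : IsLogPow (X : R[X]) (X ^ n) := by
  refine ⟨dvd_pow_self X (by omega), by simpa using sub_dvd_pow_sub_pow (X : R[X]) 1 n,
    fun g hg => ?_⟩
  cases subsingleton_or_nontrivial R
  · exact Or.inl (isUnit_of_subsingleton g)
  obtain ⟨u, k, hu, rfl⟩ := exists_eq_C_mul_X_pow_of_dvd_X_pow hind hg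
  rcases k with _ | k
  · exact Or.inl (by simpa using hu)
  · exact Or.inr ((dvd_pow_self X k.succ_ne_zero).mul_left _)

theorem eq_C_coeff_zero_of_isUnit [IsReduced R] {p : R[X]} (hp : IsUnit p) :
    p = C (p.coeff 0) :=
  eq_C_of_natDegree_eq_zero <| Nat.eq_zero_of_not_pos fun h =>
    not_isUnit_of_natDegree_pos_of_isReduced p h hp

end Polynomial

theorem IsLogPow.exists_eq_X_pow {R : Type*} [CommRing R] [IsReduced R] {f : R[X]}
    (hf : IsLogPow (X : R[X]) f) : ∃ n, 1 ≤ n ∧ f = X ^ n := by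
  cases subsingleton_or_nontrivial R
  · exact ⟨1, le_rfl, Subsingleton.elim _ _⟩
  obtain ⟨hXf, hX1, hdiv⟩ := hf
  have hf0 : f ≠ 0 := by
    rintro rfl
    refine not_isUnit_of_natDegree_pos_of_isReduced (X - C 1 : R[X])
      (by rw [natDegree_X_sub_C]; exact one_pos) ?_
    exact isUnit_of_dvd_one (by simpa using hX1)
  obtain ⟨g, hfg, hXg⟩ := exists_eq_pow_rootMultiplicity_mul_and_not_dvd f hf0 0
  generalize f.rootMultiplicity 0 = m at hfg
  rw [C_0, sub_zero] at hfg hXg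
  have hg : g = C (g.coeff 0) :=
    eq_C_coeff_zero_of_isUnit ((hdiv g (Dvd.intro_left _ hfg.symm)).resolve_right hXg)
  have hm : 1 ≤ m := by
    by_contra! hm
    rw [Nat.lt_one_iff.mp hm, pow_zero, one_mul] at hfg
    exact hXg (hfg ▸ hXf)
  have hg1 : g.coeff 0 = 1 := by
    obtain ⟨q, hq⟩ := hX1
    have := congrArg (eval 1) hq
    rw [hfg, hg] at this
    simpa [sub_eq_zero] using this
  exact ⟨m, hm, by rw [hfg, hg, hg1, C_1, mul_one]⟩

open Polynomial in
theorem stmt_18 {R : Type*} [CommRing R] [IsReduced R]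
    (hind : ∀ e : R, IsIdempotentElem e → e = 0 ∨ e = 1)
    (f : R[X]) :
    IsLogPow (X : R[X]) f ↔ ∃ n : ℕ, 1 ≤ n ∧ f = X ^ n :=
  ⟨IsLogPow.exists_eq_X_pow, fun ⟨_, hn, hf⟩ => hf ▸ isLogPow_X_pow hind hn⟩
end
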